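/- In the Norton–Sakuma algebra of type 3C (the 3-dimensional commutative ℚ-algebra with basis a₋₁, a₀, a₁ and products a_i·a_i = a_i and a_i·a_j = (1/64)(a_i + a_j − a_k) for {i,j,k} = {−1,0,1}), the element a₀ is a primitive axis for the Monster fusion law: (1) a₀·a₀ = a₀; (2) the adjoint map ad_{a₀} is diagonalisable with all eigenvalues contained in {1, 0, 1/32}; (3) its 1-eigenspace equals ℚ • a₀; and (4) the eigenspaces obey the Monster fusion rules: E(0)·E(0) ⊆ E(0), E(1)·E(0) = 0, E(0)·E(1/32) ⊆ E(1/32), E(1)·E(1/32) ⊆ E(1/32), and E(1/32)·E(1/32) ⊆ E(1) ⊔ E(0), where E(λ) denotes the λ-eigenspace of ad_{a₀}. -/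

import Mathlib

/-- The Norton–Sakuma algebra of type 3C: the bilinear multiplication on
`ℚ³` with basis `a₋₁, a₀, a₁` (indexed by `0, 1, 2`) given by `aᵢ·aᵢ = aᵢ`
and `aᵢ·aⱼ = (1/64)(aᵢ + aⱼ − aₖ)` for `{i,j,k} = {−1,0,1}`. -/
def mul3C (x y : Fin 3 → ℚ) : Fin 3 → ℚ :=
  ![x 0 * y 0 + (1/64) * (x 0 * y 1 + x 1 * y 0 + x 0 * y 2 + x 2 * y 0 - x 1 * y 2 - x 2 * y 1),
    x 1 * y 1 + (1/64) * (x 0 * y 1 + x 1 * y 0 - x 0 * y 2 - x 2 * y 0 + x 1 * y 2 + x 2 * y 1),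
    x 2 * y 2 + (1/64) * (-(x 0 * y 1) - x 1 * y 0 + x 0 * y 2 + x 2 * y 0 + x 1 * y 2 + x 2 * y 1)]

/-- The basis vectors `a₋₁, a₀, a₁` of the 3C algebra (indexed by `0, 1, 2`). -/
def a3C (i : Fin 3) : Fin 3 → ℚ := Pi.single i 1

/-- The adjoint map `ad_{a₀} : y ↦ a₀ · y` of the axis `a₀` (index `1`). -/
def ad3C : (Fin 3 → ℚ) →ₗ[ℚ] (Fin 3 → ℚ) where
  toFun := mul3C (a3C 1)
  map_add' x y := by
    funext i
    fin_cases i <;>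
      simp [mul3C, a3C, Pi.single_apply] <;> ring
  map_smul' c x := by
    funext i
    fin_cases i <;>
      simp [mul3C, a3C, Pi.single_apply] <;> ring

/-- `E μ` is the `μ`-eigenspace of `ad_{a₀}`. -/
def E3C (μ : ℚ) : Submodule ℚ (Fin 3 → ℚ) := Module.End.eigenspace ad3C μ

lemma mem_E3C {μ : ℚ} {x : Fin 3 → ℚ} : x ∈ E3C μ ↔ mul3C (a3C 1) x = μ • x :=
  Module.End.mem_eigenspace_iff

lemma mem_E3C' {μ : ℚ} {x : Fin 3 → ℚ} :
    x ∈ E3C μ ↔ (64⁻¹ * (x 0 - x 2) = μ * x 0 ∧ x 1 + 64⁻¹ * (x 0 + x 2) = μ * x 1 ∧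
      64⁻¹ * (-x 0 + x 2) = μ * x 2) := by
  rw [mem_E3C]
  constructor
  · intro h
    have h0 := congrFun h 0
    have h1 := congrFun h 1
    have h2 := congrFun h 2
    simp [mul3C, a3C, Pi.single_apply] at h0 h1 h2
    exact ⟨h0, h1, h2⟩
  · rintro ⟨h0, h1, h2⟩
    funext i
    fin_cases i <;> simp [mul3C, a3C, Pi.single_apply] <;> assumption

lemma a3C_one : a3C 1 = ![0, 1, 0] := by
  funext i; fin_cases i <;> simp [a3C]

set_option maxHeartbeats 1000000 in
/-- In the Norton–Sakuma algebra of type 3C, `a₀` is a primitive axis for the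
Monster fusion law. -/
theorem nortonSakuma3C_axis :
    mul3C (a3C 1) (a3C 1) = a3C 1 ∧
    (⨆ μ : ℚ, E3C μ) = ⊤ ∧
    (∀ μ : ℚ, Module.End.HasEigenvalue ad3C μ → μ ∈ ({1, 0, 1/32} : Set ℚ)) ∧
    E3C 1 = Submodule.span ℚ {a3C 1} ∧
    (∀ u ∈ E3C 0, ∀ v ∈ E3C 0, mul3C u v ∈ E3C 0) ∧
    (∀ u ∈ E3C 1, ∀ v ∈ E3C 0, mul3C u v = 0) ∧
    (∀ u ∈ E3C 0, ∀ v ∈ E3C (1/32), mul3C u v ∈ E3C (1/32)) ∧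
    (∀ u ∈ E3C 1, ∀ v ∈ E3C (1/32), mul3C u v ∈ E3C (1/32)) ∧
    (∀ u ∈ E3C (1/32), ∀ v ∈ E3C (1/32), mul3C u v ∈ E3C 1 ⊔ E3C 0) := by
  have ha0 : a3C 1 ∈ E3C 1 := by
    rw [mem_E3C', a3C_one]; norm_num [Matrix.cons_val_two, Matrix.tail_cons, Matrix.head_cons]
  have hu0 : (![1, -(1/32), 1] : Fin 3 → ℚ) ∈ E3C 0 := by
    rw [mem_E3C']; norm_num [Matrix.cons_val_two, Matrix.tail_cons, Matrix.head_cons]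
  have hw0 : (![1, 0, -1] : Fin 3 → ℚ) ∈ E3C (1/32) := by
    rw [mem_E3C']; norm_num [Matrix.cons_val_two, Matrix.tail_cons, Matrix.head_cons]
  refine ⟨?_, ?_, ?_, ?_, ?_, ?_, ?_, ?_, ?_⟩
  · funext i
    fin_cases i <;> simp [mul3C, a3C, Pi.single_apply]
  · rw [eq_top_iff]
    intro x _
    have hx : x = (x 1 + (x 0 + x 2)/64) • a3C 1 + ((x 0 + x 2)/2) • ![1, -(1/32), 1]
        + ((x 0 - x 2)/2) • ![1, 0, -1] := by
      funext i
      fin_cases i <;> simp [a3C_one] <;> ring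
    rw [hx]
    exact add_mem (add_mem
      (Submodule.mem_iSup_of_mem 1 (Submodule.smul_mem _ _ ha0))
      (Submodule.mem_iSup_of_mem 0 (Submodule.smul_mem _ _ hu0)))
      (Submodule.mem_iSup_of_mem (1/32) (Submodule.smul_mem _ _ hw0))
  · intro μ hμ
    by_contra hc
    simp only [Set.mem_insert_iff, Set.mem_singleton_iff, not_or] at hc
    obtain ⟨hμ1, hμ0, hμ32⟩ := hc
    obtain ⟨x, hx, hxne⟩ := hμ.exists_hasEigenvector
    obtain ⟨h0, h1, h2⟩ := mem_E3C'.mp (hx : x ∈ E3C μ)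
    have h02 : μ * (x 0 + x 2) = 0 := by linear_combination -h0 - h2
    have hs : x 0 + x 2 = 0 := by
      rcases mul_eq_zero.mp h02 with h | h
      · exact absurd h hμ0
      · exact h
    have hx0 : x 0 = 0 := by
      have : x 0 * (1/32 - μ) = 0 := by linear_combination h0 + 64⁻¹ * hs
      rcases mul_eq_zero.mp this with h | h
      · exact h
      · exact absurd (by linarith) hμ32
    have hx2 : x 2 = 0 := by linarith
    have hx1 : x 1 = 0 := by
      have : x 1 * (1 - μ) = 0 := by linear_combination h1 - 64⁻¹ * hs
      rcases mul_eq_zero.mp this with h | h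
      · exact h
      · exact absurd (by linarith) hμ1
    exact hxne (funext fun i => by fin_cases i <;> assumption)
  · ext x
    rw [Submodule.mem_span_singleton, mem_E3C']
    constructor
    · rintro ⟨h0, h1, h2⟩
      have hx0 : x 0 = 0 := by linarith
      have hx2 : x 2 = 0 := by linarith
      exact ⟨x 1, funext fun i => by fin_cases i <;>
        simp [a3C_one] <;> simp [hx0, hx2]⟩
    · rintro ⟨c, rfl⟩
      norm_num [a3C_one, Matrix.cons_val_two, Matrix.tail_cons, Matrix.head_cons]
  · intro u hu v hv
    obtain ⟨h0, h1, h2⟩ := mem_E3C'.mp hu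
    obtain ⟨g0, g1, g2⟩ := mem_E3C'.mp hv
    rw [mem_E3C']
    have hu0' : u 0 = u 2 := by linarith
    have hu1' : u 1 = -(u 0 + u 2)/64 := by linarith
    have hv0' : v 0 = v 2 := by linarith
    have hv1' : v 1 = -(v 0 + v 2)/64 := by linarith
    refine ⟨?_, ?_, ?_⟩ <;> simp [mul3C, hu0', hu1', hv0', hv1'] <;> ring
  · intro u hu v hv
    obtain ⟨h0, h1, h2⟩ := mem_E3C'.mp hu
    obtain ⟨g0, g1, g2⟩ := mem_E3C'.mp hv
    have hu0 : u 0 = 0 := by linarith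
    have hu2 : u 2 = 0 := by linarith
    have hv0 : v 0 = v 2 := by linarith
    have hv1 : v 1 = -(v 0 + v 2)/64 := by linarith
    funext i
    fin_cases i <;> simp [mul3C, hu0, hu2, hv1, hv0] <;> ring
  · intro u hu v hv
    obtain ⟨h0, h1, h2⟩ := mem_E3C'.mp hu
    obtain ⟨g0, g1, g2⟩ := mem_E3C'.mp hv
    rw [mem_E3C']
    have hu0 : u 0 = u 2 := by linarith
    have hu1 : u 1 = -(u 0 + u 2)/64 := by linarith
    have hv2 : v 2 = -v 0 := by linarith
    have hv1 : v 1 = 0 := by linarith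
    refine ⟨?_, ?_, ?_⟩ <;> simp [mul3C, hu0, hu1, hv2, hv1] <;> ring
  · intro u hu v hv
    obtain ⟨h0, h1, h2⟩ := mem_E3C'.mp hu
    obtain ⟨g0, g1, g2⟩ := mem_E3C'.mp hv
    rw [mem_E3C']
    have hu0 : u 0 = 0 := by linarith
    have hu2 : u 2 = 0 := by linarith
    have hv2 : v 2 = -v 0 := by linarith
    have hv1 : v 1 = 0 := by linarith
    refine ⟨?_, ?_, ?_⟩ <;> simp [mul3C, hu0, hu2, hv2, hv1] <;> ring
  · intro u hu v hv
    obtain ⟨h0, h1, h2⟩ := mem_E3C'.mp hu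
    obtain ⟨g0, g1, g2⟩ := mem_E3C'.mp hv
    have hu2 : u 2 = -u 0 := by linarith
    have hu1 : u 1 = 0 := by linarith
    have hv2 : v 2 = -v 0 := by linarith
    have hv1 : v 1 = 0 := by linarith
    have heq : mul3C u v = (63 * (u 0 * v 0) / 1024) • a3C 1
        + ((31/32) * (u 0 * v 0)) • ![1, -(1/32), 1] := by
      funext i
      fin_cases i <;> simp [mul3C, a3C_one, hu2, hu1, hv2, hv1] <;> ring
    exact Submodule.mem_sup.mpr ⟨_, Submodule.smul_mem _ _ ha0,
      _, Submodule.smul_mem _ _ hu0, heq.symm⟩
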